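/- For all positive integers k, n and every integer s: 2^{k-1} · f_{kn}(s,-1) = f_n(s,-1) · (K · f_n(s,-1)^2 + k · g_n(s,-1)^{k-1}) for some integer K. Equivalently, 2^{k-1} f_{kn} ≡ k · f_n · g_n^{k-1} (mod f_n^3). -/
import Mathlib


/-- Generalized Fibonacci sequence: f 0 = 0, f 1 = 1, f (n+2) = s * f (n+1) + t * f n. -/
def genFib (s t : ℤ) : ℕ → ℤ
  | 0 => 0
  | 1 => 1
  | n + 2 => s * genFib s t (n + 1) + t * genFib s t n

/-- Generalized Lucas sequence for t = -1: g 0 = 2, g 1 = s, g (n+2) = s * g (n+1) - g n. -/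
def genLucas (s : ℤ) : ℕ → ℤ
  | 0 => 2
  | 1 => s
  | n + 2 => s * genLucas s (n + 1) - genLucas s n

lemma fib2 (s : ℤ) (n : ℕ) :
    genFib s (-1) (n + 2) = s * genFib s (-1) (n + 1) - genFib s (-1) n := by
  simp [genFib]; ring

lemma g_eq (s : ℤ) : ∀ n, genLucas s n = 2 * genFib s (-1) (n + 1) - s * genFib s (-1) n := by
  intro n
  induction n using Nat.twoStepInduction with
  | zero => simp [genFib, genLucas]
  | one => simp [genFib, genLucas]; ring
  | more n ih1 ih2 =>
    have h1 : genLucas s (n + 2) = s * genLucas s (n + 1) - genLucas s n := rfl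
    rw [h1, ih1, ih2, fib2 s (n + 1), fib2 s n]; ring

lemma F1 (s : ℤ) : ∀ m n, genFib s (-1) (m + n + 1) =
    genFib s (-1) (m + 1) * genFib s (-1) (n + 1) - genFib s (-1) m * genFib s (-1) n := by
  intro m
  induction m using Nat.twoStepInduction with
  | zero => intro n; simp [genFib]
  | one =>
    intro n
    have : 1 + n + 1 = n + 2 := by omega
    rw [this, fib2]
    simp [genFib]
  | more m ih1 ih2 =>
    intro n
    rw [show m + 2 + n + 1 = (m + n + 1) + 2 by omega, fib2,
      show m + n + 1 + 1 = (m + 1) + n + 1 by omega, ih2 n, ih1 n,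
      show m + 2 + 1 = (m + 1) + 2 by omega, fib2 s (m + 1),
      show m + 1 + 1 = m + 2 by omega, fib2 s m]
    ring

lemma F2 (s : ℤ) (m n : ℕ) : genFib s (-1) (m + n) =
    genFib s (-1) (m + 1) * genFib s (-1) n + genFib s (-1) m * genFib s (-1) (n + 1)
      - s * genFib s (-1) m * genFib s (-1) n := by
  cases n with
  | zero => simp [genFib]
  | succ n =>
    have e : m + (n + 1) = m + n + 1 := by omega
    rw [e, F1 s m n, show n + 1 + 1 = n + 2 by rfl, fib2 s n]
    ring

lemma addF (s : ℤ) (m n : ℕ) : 2 * genFib s (-1) (m + n) =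
    genFib s (-1) m * genLucas s n + genFib s (-1) n * genLucas s m := by
  rw [F2, g_eq, g_eq]; ring

lemma addG (s : ℤ) (m n : ℕ) : 2 * genLucas s (m + n) =
    genLucas s m * genLucas s n + (s ^ 2 - 4) * genFib s (-1) m * genFib s (-1) n := by
  rw [g_eq, g_eq, g_eq, F1 s m n, F2 s m n]
  ring

lemma key (s : ℤ) (n : ℕ) : ∀ k, 1 ≤ k →
    ∃ K L : ℤ, 2 ^ (k - 1) * genFib s (-1) (k * n) =
      genFib s (-1) n * (K * (genFib s (-1) n) ^ 2 + (k : ℤ) * (genLucas s n) ^ (k - 1)) ∧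
    2 ^ (k - 1) * genLucas s (k * n) = L * (genFib s (-1) n) ^ 2 + (genLucas s n) ^ k := by
  intro k hk
  induction k, hk using Nat.le_induction with
  | base => exact ⟨0, 0, by simp, by simp⟩
  | succ k hk ih =>
    obtain ⟨K, L, h1, h2⟩ := ih
    set f := genFib s (-1) with hf
    set g := genLucas s with hg
    refine ⟨K * g n + L, L * g n + (s ^ 2 - 4) * (K * f n ^ 2 + (k : ℤ) * g n ^ (k - 1)), ?_, ?_⟩
    · have e : (k + 1) * n = k * n + n := by ring
      have h3 : 2 * f (k * n + n) = f (k * n) * g n + f n * g (k * n) := addF s (k * n) n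
      have hp : (2:ℤ) ^ (k + 1 - 1) = 2 ^ (k - 1) * 2 := by
        rw [show k + 1 - 1 = (k - 1) + 1 by omega, pow_succ]
      rw [e, hp, show k + 1 - 1 = k by omega]
      push_cast
      calc 2 ^ (k - 1) * 2 * f (k * n + n)
          = g n * (2 ^ (k - 1) * f (k * n)) + f n * (2 ^ (k - 1) * g (k * n)) := by
            rw [mul_assoc, h3]; ring
        _ = g n * (f n * (K * f n ^ 2 + (k : ℤ) * g n ^ (k - 1)))
            + f n * (L * f n ^ 2 + g n ^ k) := by rw [h1, h2]
        _ = f n * ((K * g n + L) * f n ^ 2 + ((k : ℤ) + 1) * g n ^ k) := by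
            have h4 : g n * g n ^ (k - 1) = g n ^ k := by
              rw [← pow_succ']; congr 1; omega
            rw [← h4]; ring
    · have e : (k + 1) * n = k * n + n := by ring
      have h3 : 2 * g (k * n + n) = g (k * n) * g n + (s ^ 2 - 4) * f (k * n) * f n :=
        addG s (k * n) n
      have hp : (2:ℤ) ^ (k + 1 - 1) = 2 ^ (k - 1) * 2 := by
        rw [show k + 1 - 1 = (k - 1) + 1 by omega, pow_succ]
      rw [e, hp]
      calc 2 ^ (k - 1) * 2 * g (k * n + n)
          = g n * (2 ^ (k - 1) * g (k * n))
            + (s ^ 2 - 4) * f n * (2 ^ (k - 1) * f (k * n)) := by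
            rw [mul_assoc, h3]; ring
        _ = g n * (L * f n ^ 2 + g n ^ k)
            + (s ^ 2 - 4) * f n * (f n * (K * f n ^ 2 + (k : ℤ) * g n ^ (k - 1))) := by
            rw [h1, h2]
        _ = (L * g n + (s ^ 2 - 4) * (K * f n ^ 2 + (k : ℤ) * g n ^ (k - 1))) * f n ^ 2
            + g n ^ (k + 1) := by
            have : g n * g n ^ k = g n ^ (k + 1) := by rw [← pow_succ']
            rw [← this]; ring

/-- 2^(k-1) f_{kn}(s,-1) = f_n (K f_n² + k g_n^(k-1)) for some integer K. -/
theorem two_pow_mul_fib (s : ℤ) (k n : ℕ) (hk : 1 ≤ k) (hn : 1 ≤ n) :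
    ∃ K : ℤ, 2 ^ (k - 1) * genFib s (-1) (k * n) =
      genFib s (-1) n * (K * (genFib s (-1) n) ^ 2 +
        (k : ℤ) * (genLucas s n) ^ (k - 1)) := by
  obtain ⟨K, L, h1, _⟩ := key s n k hk
  exact ⟨K, h1⟩
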